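/- Let Lx, Ly and m be positive integers with m ≤ min(Lx, Ly) − 1. Then the number of unordered pairs {a, b} of distinct sites of the Lx × Ly lattice whose uniform (Chebyshev) distance equals m is exactly 4·m·Lx·Ly − 3·(Lx + Ly)·m² + 2·m³. -/

import Mathlib

/-!
Ordered pairs of sites at uniform distance `≤ k` are products of pairs of coordinates at distance
`≤ k`, and along a line of `L > k` sites there are `(2k+1)L − k(k+1)` of those. The pairs at
distance exactly `m` are the difference of the counts for `m` and `m − 1`, and each unordered pair
comes from two ordered ones.
-/

/-- The site set of the `Lx × Ly` square lattice. -/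
def latticeSites (Lx Ly : ℕ) : Finset (ℕ × ℕ) :=
  Finset.range Lx ×ˢ Finset.range Ly

/-- The (non-periodic) uniform (Chebyshev) distance between two lattice sites. -/
def uniformDist (a b : ℕ × ℕ) : ℕ :=
  max (Nat.dist a.1 b.1) (Nat.dist a.2 b.2)

open Finset

namespace Finset

theorem two_mul_card_filter_powersetCard_two {α : Type*} [DecidableEq α] (s : Finset α)
    (r : α → α → Prop) [DecidableRel r] (hr : ∀ a b, r a b → r b a) :
    2 * #{p ∈ s.powersetCard 2 | ∃ a ∈ p, ∃ b ∈ p, a ≠ b ∧ r a b}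
      = #{q ∈ s.offDiag | r q.1 q.2} := by
  have hmaps : ∀ q ∈ {q ∈ s.offDiag | r q.1 q.2}, ({q.1, q.2} : Finset α) ∈
      {p ∈ s.powersetCard 2 | ∃ a ∈ p, ∃ b ∈ p, a ≠ b ∧ r a b} := by
    rintro ⟨a, b⟩ hq
    obtain ⟨⟨ha, hb, hab⟩, hrab⟩ := by simpa only [mem_filter, mem_offDiag] using hq
    refine mem_filter.2 ⟨mem_powersetCard.2 ⟨?_, card_pair hab⟩, a, ?_, b, ?_, hab, hrab⟩
    · simp [insert_subset_iff, ha, hb]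
    all_goals simp
  rw [card_eq_sum_card_fiberwise hmaps, mul_comm, ← smul_eq_mul, ← sum_const]
  refine sum_congr rfl fun p hp => ?_
  simp only [mem_filter, mem_powersetCard] at hp
  obtain ⟨⟨hps, hp2⟩, a, ha, b, hb, hab, hrab⟩ := hp
  obtain rfl : p = {a, b} := (eq_of_subset_of_card_le (by grind) (by rw [hp2, card_pair hab])).symm
  have hfiber : {q ∈ {q ∈ s.offDiag | r q.1 q.2} | ({q.1, q.2} : Finset α) = {a, b}}
      = {(a, b), (b, a)} := by
    ext ⟨c, d⟩
    simp only [mem_filter, mem_offDiag, mem_insert, mem_singleton, Prod.mk.injEq, ← coe_inj,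
      coe_pair, Set.pair_eq_pair_iff]
    constructor
    · exact fun h => h.2
    · rintro (⟨rfl, rfl⟩ | ⟨rfl, rfl⟩)
      · exact ⟨⟨⟨hps ha, hps hb, hab⟩, hrab⟩, .inl ⟨rfl, rfl⟩⟩
      · exact ⟨⟨⟨hps hb, hps ha, hab.symm⟩, hr _ _ hrab⟩, .inr ⟨rfl, rfl⟩⟩
  rw [hfiber, card_pair (by simp [hab])]

theorem filter_offDiag_eq_filter_product {α : Type*} [DecidableEq α] (s : Finset α)
    (r : α → α → Prop) [DecidableRel r] (hr : ∀ a, ¬ r a a) :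
    {q ∈ s.offDiag | r q.1 q.2} = {q ∈ s ×ˢ s | r q.1 q.2} := by
  ext ⟨a, b⟩
  simp only [mem_filter, mem_offDiag, mem_product]
  grind

theorem card_filter_eq_succ_add_card_filter_le {β : Type*} (s : Finset β) (f : β → ℕ)
    (k : ℕ) :
    #{x ∈ s | f x = k + 1} + #{x ∈ s | f x ≤ k} = #{x ∈ s | f x ≤ k + 1} := by
  classical
  rw [← card_union_of_disjoint (disjoint_filter.2 fun _ _ => by omega), ← filter_or]
  exact congrArg card (filter_congr fun _ _ => by omega)

end Finset

theorem card_filter_range_dist_le {L : ℕ} (k : ℕ) {x : ℕ} (hx : x < L) :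
    #{y ∈ range L | Nat.dist x y ≤ k} = min x k + min (L - 1 - x) k + 1 := by
  have : {y ∈ range L | Nat.dist x y ≤ k} = Icc (x - k) (min (x + k) (L - 1)) := by
    ext y
    rw [mem_filter, mem_range, mem_Icc, Nat.dist]
    omega
  rw [this, Nat.card_Icc]
  omega

theorem two_mul_sum_range_min {k L : ℕ} (hk : k ≤ L) :
    2 * ∑ x ∈ range L, (min x k : ℤ) = 2 * k * L - k * (k + 1) := by
  induction L, hk using Nat.le_induction with
  | base =>
    rw [sum_congr rfl fun x hx => min_eq_left (mod_cast (mem_range.1 hx).le)]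
    induction k with
    | zero => simp
    | succ n ih => rw [sum_range_succ, mul_add, ih]; push_cast; ring
  | succ L hkL ih =>
    rw [sum_range_succ, mul_add, ih, min_eq_right (by omega)]
    push_cast
    ring

theorem card_filter_range_product_dist_le {k L : ℕ} (hk : k < L) :
    (#{p ∈ range L ×ˢ range L | Nat.dist p.1 p.2 ≤ k} : ℤ)
      = (2 * k + 1) * L - k * (k + 1) := by
  rw [card_filter, sum_product]
  simp_rw [← card_filter]
  rw [sum_congr rfl fun x hx => card_filter_range_dist_le k (mem_range.1 hx)]
  have hreflect : ∑ x ∈ range L, min (L - 1 - x) k = ∑ x ∈ range L, min x k := by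
    rw [← sum_range_reflect]
    exact sum_congr rfl fun x hx => by rw [mem_range] at hx; congr 1; omega
  rw [sum_add_distrib, sum_add_distrib, hreflect, sum_const, card_range, smul_eq_mul, mul_one]
  push_cast
  linarith [two_mul_sum_range_min hk.le]

theorem uniformDist_comm (a b : ℕ × ℕ) : uniformDist a b = uniformDist b a := by
  simp only [uniformDist, Nat.dist_comm]

theorem uniformDist_self (a : ℕ × ℕ) : uniformDist a a = 0 := by
  simp [uniformDist]

theorem card_filter_uniformDist_le (Lx Ly k : ℕ) :
    #{q ∈ latticeSites Lx Ly ×ˢ latticeSites Lx Ly | uniformDist q.1 q.2 ≤ k}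
      = #{p ∈ range Lx ×ˢ range Lx | Nat.dist p.1 p.2 ≤ k}
        * #{p ∈ range Ly ×ˢ range Ly | Nat.dist p.1 p.2 ≤ k} := by
  rw [← card_product]
  refine card_equiv (Equiv.prodProdProdComm ℕ ℕ ℕ ℕ) fun q => ?_
  simp only [latticeSites, uniformDist, mem_filter, mem_product, mem_range, max_le_iff,
    Equiv.prodProdProdComm_apply]
  tauto

theorem nonperiodic_uniform_pair_count_general (Lx Ly m : ℕ)
    (hm : 0 < m) (hmle : m ≤ min Lx Ly - 1) :
    (((((latticeSites Lx Ly).powersetCard 2).filter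
      (fun p => ∃ a ∈ p, ∃ b ∈ p, a ≠ b ∧ uniformDist a b = m)).card) : ℤ)
      = 4 * m * Lx * Ly - 3 * (Lx + Ly) * m ^ 2 + 2 * m ^ 3 := by
  obtain ⟨k, rfl⟩ : ∃ k, m = k + 1 := ⟨m - 1, by omega⟩
  have hpairs := two_mul_card_filter_powersetCard_two (latticeSites Lx Ly)
    (fun a b => uniformDist a b = k + 1) fun a b h => (uniformDist_comm b a).trans h
  rw [filter_offDiag_eq_filter_product _ (fun a b => uniformDist a b = k + 1)
    fun a h => by simp [uniformDist_self] at h] at hpairs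
  have hsplit := card_filter_eq_succ_add_card_filter_le
    (latticeSites Lx Ly ×ˢ latticeSites Lx Ly) (fun q => uniformDist q.1 q.2) k
  rw [← hpairs, card_filter_uniformDist_le, card_filter_uniformDist_le] at hsplit
  replace hsplit := congrArg (Nat.cast : ℕ → ℤ) hsplit
  simp only [Nat.cast_add, Nat.cast_mul, Nat.cast_ofNat] at hsplit
  rw [card_filter_range_product_dist_le (k := k) (by omega),
    card_filter_range_product_dist_le (k := k) (by omega),
    card_filter_range_product_dist_le (k := k + 1) (by omega),
    card_filter_range_product_dist_le (k := k + 1) (by omega)] at hsplit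
  push_cast at hsplit ⊢
  linarith

/-- For `0 < m ≤ min Lx Ly − 1`, the number of unordered pairs of distinct sites
of the `Lx × Ly` lattice at uniform distance exactly `m` is
`4 m Lx Ly − 3 (Lx + Ly) m² + 2 m³`. -/
theorem nonperiodic_uniform_pair_count (Lx Ly m : ℕ) (hLx : 0 < Lx) (hLy : 0 < Ly)
    (hm : 0 < m) (hmle : m ≤ min Lx Ly - 1) :
    (((((latticeSites Lx Ly).powersetCard 2).filter
      (fun p => ∃ a ∈ p, ∃ b ∈ p, a ≠ b ∧ uniformDist a b = m)).card) : ℤ)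
      = 4 * m * Lx * Ly - 3 * (Lx + Ly) * m ^ 2 + 2 * m ^ 3 :=
  nonperiodic_uniform_pair_count_general Lx Ly m hm hmle
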